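/- arXiv:1012.2389 — 3 statements merged into one kernel-verified Lean document; each statement's English description precedes it below -/
import Mathlib

section
/- Let L be a (right) Leibniz algebra over ℂ containing elements e_1, …, e_n (n ≥ 9) with [e_i, e_1] = e_{i+1} for 1 ≤ i ≤ n-1, i ≠ 3, [e_3,e_1] = [e_n,e_1] = 0, and suppose e_2, e_3 ∈ R(L) and [e_i, e_4] = β_i e_{i+1} for 6 ≤ i ≤ n-1 with [e_n, e_4] = 0, [e_3, e_4] = β_3 e_7, [e_5, e_4] = α_4 e_3 + β_5 e_6. Then for all 5 ≤ i ≤ n-3 and 6 ≤ j ≤ n+3-i: [e_i, e_j] = (Σ_{k=0}^{j-4} (-1)^k C(j-4, k) β_{i+k}) e_{i+j-3}. -/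
/-!
Write `j = m + 4`. Since `e_{m+5} = [e_{m+4}, e_1]`, the Leibniz identity gives
`[e_i, e_{m+5}] = [[e_i, e_{m+4}], e_1] - [e_{i+1}, e_{m+4}]`, so the coefficients
`c_i(m)` of `[e_i, e_{m+4}] = c_i(m) e_{i+m+1}` satisfy `c_i(m+1) = c_i(m) - c_{i+1}(m)`.
With `c_i(0) = β_i` this is `c_i(m) = (-1)^m Δ^m β_i`, whose binomial expansion is the claim.
For `i = 5` the recursion starts at `m = 1` instead, because `[e_5, e_4]` has an extra
`e_3`-component; it dies in `[e_5, e_5]` since `[e_3, e_1] = 0`.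
-/

open Finset fwdDiff

section Differences

variable {R : Type*} [CommRing R]

lemma neg_one_pow_mul_fwdDiff_iter_succ (f : ℕ → R) (m i : ℕ) :
    (-1) ^ (m + 1) * (Δ_[1])^[m + 1] f i
      = (-1) ^ m * (Δ_[1])^[m] f i - (-1) ^ m * (Δ_[1])^[m] f (i + 1) := by
  rw [Function.iterate_succ_apply', fwdDiff, pow_succ]
  ring

lemma neg_one_pow_mul_fwdDiff_iter_eq_sum (f : ℕ → R) (m i : ℕ) :
    (-1) ^ m * (Δ_[1])^[m] f i
      = ∑ k ∈ range (m + 1), (-1) ^ k * (m.choose k : R) * f (i + k) := by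
  rw [fwdDiff_iter_eq_sum_shift, mul_sum]
  refine sum_congr rfl fun k hk => ?_
  have hsign : ((-1 : R) ^ m * (-1) ^ (m - k)) = (-1) ^ k := by
    obtain ⟨d, rfl⟩ := Nat.exists_eq_add_of_le (Nat.lt_succ_iff.mp (mem_range.mp hk))
    rw [Nat.add_sub_cancel_left, pow_add, mul_assoc, ← pow_add, ← two_mul, pow_mul,
      neg_one_sq, one_pow, mul_one]
  rw [zsmul_eq_mul, smul_eq_mul, mul_one]
  push_cast
  linear_combination (m.choose k * f (i + k)) * hsign

end Differences

section Leibniz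

variable {R L : Type*} [CommRing R] [AddCommGroup L] [Module R L]
  {br : L →ₗ[R] L →ₗ[R] L} {n : ℕ} {e : ℕ → L}

lemma bracket_e_succ_eq_sub_smul
    (hLeib : ∀ x y z : L, br x (br y z) = br (br x y) z - br (br x z) y)
    (hchain : ∀ i : ℕ, 1 ≤ i → i ≤ n - 1 → i ≠ 3 → br (e i) (e 1) = e (i + 1))
    {i m : ℕ} (hi : 4 ≤ i) (hn : i + m + 2 ≤ n) {c c' : R}
    (h : br (e i) (e (m + 4)) = c • e (i + m + 1))
    (h' : br (e (i + 1)) (e (m + 4)) = c' • e (i + 1 + m + 1)) :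
    br (e i) (e (m + 1 + 4)) = (c - c') • e (i + (m + 1) + 1) := by
  rw [show i + 1 + m + 1 = i + m + 1 + 1 by omega] at h'
  rw [show i + (m + 1) + 1 = i + m + 1 + 1 by omega,
    ← hchain (m + 4) (by omega) (by omega) (by omega), hLeib, h,
    hchain i (by omega) (by omega) (by omega), h', map_smul, LinearMap.smul_apply,
    hchain (i + m + 1) (by omega) (by omega) (by omega), sub_smul]

variable {β : ℕ → R}

lemma bracket_e_of_six_le
    (hLeib : ∀ x y z : L, br x (br y z) = br (br x y) z - br (br x z) y)
    (hchain : ∀ i : ℕ, 1 ≤ i → i ≤ n - 1 → i ≠ 3 → br (e i) (e 1) = e (i + 1))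
    (h4 : ∀ i : ℕ, 6 ≤ i → i ≤ n - 1 → br (e i) (e 4) = β i • e (i + 1))
    (m : ℕ) {i : ℕ} (hi : 6 ≤ i) (hn : i + m + 1 ≤ n) :
    br (e i) (e (m + 4)) = ((-1) ^ m * (Δ_[1])^[m] β i) • e (i + m + 1) := by
  induction m generalizing i with
  | zero => simpa using h4 i hi (by omega)
  | succ m ih =>
    rw [neg_one_pow_mul_fwdDiff_iter_succ]
    exact bracket_e_succ_eq_sub_smul hLeib hchain (by omega) (by omega)
      (ih hi (by omega)) (ih (i := i + 1) (by omega) (by omega))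

lemma bracket_e_five
    (hLeib : ∀ x y z : L, br x (br y z) = br (br x y) z - br (br x z) y)
    (hchain : ∀ i : ℕ, 1 ≤ i → i ≤ n - 1 → i ≠ 3 → br (e i) (e 1) = e (i + 1))
    (h31 : br (e 3) (e 1) = 0)
    (h4 : ∀ i : ℕ, 6 ≤ i → i ≤ n - 1 → br (e i) (e 4) = β i • e (i + 1))
    {α₄ : R} (h54 : br (e 5) (e 4) = α₄ • e 3 + β 5 • e 6)
    (m : ℕ) (hm : 1 ≤ m) (hn : m + 6 ≤ n) :
    br (e 5) (e (m + 4)) = ((-1) ^ m * (Δ_[1])^[m] β 5) • e (5 + m + 1) := by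
  induction m, hm using Nat.le_induction with
  | base =>
    have h55 : br (e 5) (e 5) = (β 5 - β 6) • e 7 := by
      nth_rw 2 [← hchain 4 (by omega) (by omega) (by omega)]
      rw [hLeib, h54, hchain 5 (by omega) (by omega) (by omega), h4 6 le_rfl (by omega), map_add,
        map_smul, map_smul, LinearMap.add_apply, LinearMap.smul_apply, LinearMap.smul_apply,
        h31, hchain 6 (by omega) (by omega) (by omega), smul_zero, zero_add, sub_smul]
    simpa [fwdDiff] using h55
  | succ m hm ih =>
    rw [neg_one_pow_mul_fwdDiff_iter_succ]
    exact bracket_e_succ_eq_sub_smul hLeib hchain (i := 5) (by norm_num) (by omega) (ih (by omega))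
      (bracket_e_of_six_le hLeib hchain h4 m le_rfl (by omega))

end Leibniz

open Finset in
theorem binomial_bracket_formula_general
    {L : Type*} [AddCommGroup L] [Module ℂ L]
    (br : L →ₗ[ℂ] L →ₗ[ℂ] L)
    (hLeib : ∀ x y z : L, br x (br y z) = br (br x y) z - br (br x z) y)
    (n : ℕ) (e : ℕ → L) (β : ℕ → ℂ) (α₄ : ℂ)
    (hchain : ∀ i : ℕ, 1 ≤ i → i ≤ n - 1 → i ≠ 3 →
      br (e i) (e 1) = e (i + 1))
    (h31 : br (e 3) (e 1) = 0)
    (h4 : ∀ i : ℕ, 6 ≤ i → i ≤ n - 1 → br (e i) (e 4) = β i • e (i + 1))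
    (h54 : br (e 5) (e 4) = α₄ • e 3 + β 5 • e 6) :
    ∀ i j : ℕ, 5 ≤ i → i ≤ n - 3 → 6 ≤ j → j ≤ n + 3 - i →
      br (e i) (e j) =
        (∑ k ∈ Finset.range (j - 3),
          (-1 : ℂ) ^ k * ((j - 4).choose k : ℂ) * β (i + k)) •
            e (i + j - 3) := by
  intro i j hi hin hj hjn
  obtain ⟨m, rfl⟩ : ∃ m, j = m + 4 := ⟨j - 4, by omega⟩
  rw [show m + 4 - 3 = m + 1 by omega, show m + 4 - 4 = m by omega,
    show i + (m + 4) - 3 = i + m + 1 by omega, ← neg_one_pow_mul_fwdDiff_iter_eq_sum]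
  rcases (show i = 5 ∨ 6 ≤ i by omega) with rfl | hi6
  · exact bracket_e_five hLeib hchain h31 h4 h54 m (by omega) (by omega)
  · exact bracket_e_of_six_le hLeib hchain h4 m hi6 (by omega)

open Finset in
/-- The binomial formula
`[eᵢ,eⱼ] = (Σ_{k=0}^{j-4} (-1)^k C(j-4,k) β_{i+k}) e_{i+j-3}` for
`5 ≤ i ≤ n-3`, `6 ≤ j ≤ n+3-i`, in a Leibniz algebra with the stated
products. -/
theorem binomial_bracket_formula
    {L : Type*} [AddCommGroup L] [Module ℂ L]
    (br : L →ₗ[ℂ] L →ₗ[ℂ] L)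
    (hLeib : ∀ x y z : L, br x (br y z) = br (br x y) z - br (br x z) y)
    (n : ℕ) (hn : 9 ≤ n) (e : ℕ → L) (β : ℕ → ℂ) (α₄ : ℂ)
    (hchain : ∀ i : ℕ, 1 ≤ i → i ≤ n - 1 → i ≠ 3 →
      br (e i) (e 1) = e (i + 1))
    (h31 : br (e 3) (e 1) = 0)
    (hn1 : br (e n) (e 1) = 0)
    (h2ann : ∀ w : L, br w (e 2) = 0)
    (h3ann : ∀ w : L, br w (e 3) = 0)
    (h4 : ∀ i : ℕ, 6 ≤ i → i ≤ n - 1 → br (e i) (e 4) = β i • e (i + 1))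
    (hn4 : br (e n) (e 4) = 0)
    (h34 : br (e 3) (e 4) = β 3 • e 7)
    (h54 : br (e 5) (e 4) = α₄ • e 3 + β 5 • e 6) :
    ∀ i j : ℕ, 5 ≤ i → i ≤ n - 3 → 6 ≤ j → j ≤ n + 3 - i →
      br (e i) (e j) =
        (∑ k ∈ Finset.range (j - 3),
          (-1 : ℂ) ^ k * ((j - 4).choose k : ℂ) * β (i + k)) •
            e (i + j - 3) :=
  binomial_bracket_formula_general br hLeib n e β α₄ hchain h31 h4 h54
end

section
/- Let L be an n-dimensional vector space over ℂ (n ≥ 9) with basis e_1,…,e_n and bracket given by: [e_i,e_1] = e_{i+1} for 1 ≤ i ≤ n-1, i ≠ n-3, [e_1, e_{n-2}] = λ e_{n-1}, [e_2, e_{n-2}] = λ e_n, all other products of basis elements zero, where λ ∈ ℂ. Then L is a (right) Leibniz algebra (the algebra L^{34}_{(0,λ,0)}). -/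
/-!
Every product `[e_j, e_k]` of basis vectors is a multiple of some `e_s` with `s ∉ {1, n-2}`,
and right multiplication by such an `e_s` is zero; hence `[e_i, [e_j, e_k]] = 0`. On the other
side, `[[e_i, e_j], e_k]` is symmetric in `j` and `k`, as an explicit computation shows, so the
right-hand side of the Leibniz identity vanishes on basis triples as well. The identity is
trilinear, so it holds everywhere.
-/

section Leibniz

variable {R M : Type*} [CommRing R] [AddCommGroup M] [Module R M]

theorem LinearMap.leibniz_of_span_eq_top {s : Set M} (hs : Submodule.span R s = ⊤)
    (br : M →ₗ[R] M →ₗ[R] M)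
    (h : ∀ x ∈ s, ∀ y ∈ s, ∀ z ∈ s, br x (br y z) = br (br x y) z - br (br x z) y)
    (x y z : M) : br x (br y z) = br (br x y) z - br (br x z) y := by
  have h₃ : ∀ x ∈ s, ∀ y ∈ s, ∀ z, br x (br y z) = br (br x y) z - br (br x z) y :=
    fun x hx y hy => LinearMap.congr_fun <|
      LinearMap.ext_on hs (f := br x ∘ₗ br y) (g := br (br x y) - br.flip y ∘ₗ br x)
        fun z hz => h x hx y hy z hz
  have h₂ : ∀ x ∈ s, ∀ y z, br x (br y z) = br (br x y) z - br (br x z) y :=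
    fun x hx y z => LinearMap.congr_fun (x := y) <|
      LinearMap.ext_on hs (f := br x ∘ₗ br.flip z) (g := br.flip z ∘ₗ br x - br (br x z))
        fun y hy => h₃ x hx y hy z
  exact LinearMap.congr_fun (x := x) <|
    LinearMap.ext_on hs (f := br.flip (br y z))
      (g := br.flip z ∘ₗ br.flip y - br.flip y ∘ₗ br.flip z) fun x hx => h₂ x hx y z

end Leibniz

namespace L34

variable {R L : Type*} [CommRing R] [AddCommGroup L] [Module R L]

/-- The multiplication table of `L³⁴_{(0,λ,0)}` on the vectors `e 1, …, e n`. -/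
structure IsL34 (n : ℕ) (lam : R) (e : ℕ → L) (br : L →ₗ[R] L →ₗ[R] L) : Prop where
  bracket_one : ∀ i, 1 ≤ i → i ≤ n - 1 → i ≠ n - 3 → br (e i) (e 1) = e (i + 1)
  one_bracket_sub_two : br (e 1) (e (n - 2)) = lam • e (n - 1)
  two_bracket_sub_two : br (e 2) (e (n - 2)) = lam • e n
  bracket_eq_zero : ∀ i j, 1 ≤ i → i ≤ n → 1 ≤ j → j ≤ n →
    ¬(j = 1 ∧ i ≤ n - 1 ∧ i ≠ n - 3) → ¬(j = n - 2 ∧ (i = 1 ∨ i = 2)) → br (e i) (e j) = 0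

/-- The value of `[[e_i, e_j], e_k]`. -/
def doubleBracket (n : ℕ) (lam : R) (e : ℕ → L) (i j k : ℕ) : L :=
  if j = 1 ∧ k = 1 ∧ i + 2 ≤ n ∧ i ≠ n - 3 ∧ i ≠ n - 4 then e (i + 2)
  else if ((j = 1 ∧ k = n - 2) ∨ (j = n - 2 ∧ k = 1)) ∧ i = 1 then lam • e n
  else 0

theorem doubleBracket_comm (n : ℕ) (lam : R) (e : ℕ → L) (i j k : ℕ) :
    doubleBracket n lam e i j k = doubleBracket n lam e i k j := by
  unfold doubleBracket
  split_ifs <;> first | rfl | omega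

variable {n : ℕ} {lam : R} {e : ℕ → L} {br : L →ₗ[R] L →ₗ[R] L}

namespace IsL34

open Set

theorem bracket_eq_zero_of_ne (h : IsL34 n lam e br) {i s : ℕ} (hi : i ∈ Icc 1 n)
    (hs : s ∈ Icc 2 n) (hs' : s ≠ n - 2) : br (e i) (e s) = 0 := by
  obtain ⟨hs, hsn⟩ := hs
  exact h.bracket_eq_zero i s hi.1 hi.2 (by omega) hsn (by omega) (by omega)

theorem exists_bracket_eq_smul (h : IsL34 n lam e br) (hn : 3 ≤ n) {j k : ℕ}
    (hj : j ∈ Icc 1 n) (hk : k ∈ Icc 1 n) :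
    ∃ c : R, ∃ s ∈ Icc 2 n, s ≠ n - 2 ∧ br (e j) (e k) = c • e s := by
  obtain ⟨hj, hjn⟩ := hj
  obtain ⟨hk, hkn⟩ := hk
  by_cases h₁ : k = 1 ∧ j ≤ n - 1 ∧ j ≠ n - 3
  · obtain ⟨rfl, hj₁, hj₃⟩ := h₁
    exact ⟨1, j + 1, ⟨by omega, by omega⟩, by omega, by rw [one_smul, h.bracket_one j hj hj₁ hj₃]⟩
  by_cases h₂ : k = n - 2 ∧ j = 1
  · obtain ⟨rfl, rfl⟩ := h₂
    exact ⟨lam, n - 1, ⟨by omega, by omega⟩, by omega, h.one_bracket_sub_two⟩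
  by_cases h₃ : k = n - 2 ∧ j = 2
  · obtain ⟨rfl, rfl⟩ := h₃
    exact ⟨lam, n, ⟨by omega, le_rfl⟩, by omega, h.two_bracket_sub_two⟩
  refine ⟨0, n, ⟨by omega, le_rfl⟩, by omega, ?_⟩
  rw [zero_smul, h.bracket_eq_zero j k hj hjn hk hkn (by omega) (by omega)]

theorem bracket_bracket_eq_zero (h : IsL34 n lam e br) (hn : 3 ≤ n) {i j k : ℕ}
    (hi : i ∈ Icc 1 n) (hj : j ∈ Icc 1 n) (hk : k ∈ Icc 1 n) :
    br (e i) (br (e j) (e k)) = 0 := by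
  obtain ⟨c, s, hs, hs', hjk⟩ := h.exists_bracket_eq_smul hn hj hk
  rw [hjk, map_smul, h.bracket_eq_zero_of_ne hi hs hs', smul_zero]

theorem bracket_bracket_eq_doubleBracket (h : IsL34 n lam e br) (hn : 5 ≤ n) {i j k : ℕ}
    (hi : i ∈ Icc 1 n) (hj : j ∈ Icc 1 n) (hk : k ∈ Icc 1 n) :
    br (br (e i) (e j)) (e k) = doubleBracket n lam e i j k := by
  obtain ⟨hi, hin⟩ := hi
  obtain ⟨hj, hjn⟩ := hj
  obtain ⟨hk, hkn⟩ := hk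
  unfold doubleBracket
  by_cases hij : j = 1 ∧ i ≤ n - 1 ∧ i ≠ n - 3
  · obtain ⟨rfl, hi₁, hi₃⟩ := hij
    rw [h.bracket_one i hi hi₁ hi₃]
    by_cases hik : k = 1 ∧ i + 1 ≤ n - 1 ∧ i + 1 ≠ n - 3
    · obtain ⟨rfl, hi₂, hi₄⟩ := hik
      rw [h.bracket_one (i + 1) (by omega) hi₂ hi₄, if_pos (by omega)]
    by_cases hik' : k = n - 2 ∧ i = 1
    · obtain ⟨rfl, rfl⟩ := hik'
      rw [h.two_bracket_sub_two, if_neg (by omega), if_pos (by omega)]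
    rw [h.bracket_eq_zero (i + 1) k (by omega) (by omega) hk hkn (by omega) (by omega),
      if_neg (by omega), if_neg (by omega)]
  by_cases hij' : j = n - 2 ∧ i = 1
  · obtain ⟨rfl, rfl⟩ := hij'
    rw [h.one_bracket_sub_two, map_smul, LinearMap.smul_apply]
    by_cases hk₁ : k = 1
    · subst hk₁
      rw [h.bracket_one (n - 1) (by omega) le_rfl (by omega), Nat.sub_add_cancel (by omega),
        if_neg (by omega), if_pos (by omega)]
    rw [h.bracket_eq_zero (n - 1) k (by omega) (by omega) hk hkn (by omega) (by omega),
      smul_zero, if_neg (by omega), if_neg (by omega)]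
  by_cases hij'' : j = n - 2 ∧ i = 2
  · obtain ⟨rfl, rfl⟩ := hij''
    rw [h.two_bracket_sub_two, map_smul, LinearMap.smul_apply,
      h.bracket_eq_zero n k (by omega) le_rfl hk hkn (by omega) (by omega),
      smul_zero, if_neg (by omega), if_neg (by omega)]
  rw [h.bracket_eq_zero i j hi hin hj hjn (by omega) (by omega), map_zero,
    LinearMap.zero_apply, if_neg (by omega), if_neg (by omega)]

theorem leibniz_basis (h : IsL34 n lam e br) (hn : 5 ≤ n) {i j k : ℕ}
    (hi : i ∈ Icc 1 n) (hj : j ∈ Icc 1 n) (hk : k ∈ Icc 1 n) :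
    br (e i) (br (e j) (e k)) = br (br (e i) (e j)) (e k) - br (br (e i) (e k)) (e j) := by
  rw [h.bracket_bracket_eq_zero (by omega) hi hj hk, h.bracket_bracket_eq_doubleBracket hn hi hj hk,
    h.bracket_bracket_eq_doubleBracket hn hi hk hj, doubleBracket_comm, sub_self]

end IsL34

end L34

theorem L34_is_leibniz_general
    {L : Type*} [AddCommGroup L] [Module ℂ L]
    (n : ℕ) (hn : 9 ≤ n) (e : ℕ → L) (lam : ℂ)
    (hspan : Submodule.span ℂ (e '' Set.Icc 1 n) = ⊤)
    (br : L →ₗ[ℂ] L →ₗ[ℂ] L)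
    (hchain : ∀ i : ℕ, 1 ≤ i → i ≤ n - 1 → i ≠ n - 3 →
      br (e i) (e 1) = e (i + 1))
    (h1 : br (e 1) (e (n - 2)) = lam • e (n - 1))
    (h2 : br (e 2) (e (n - 2)) = lam • e n)
    (hzero : ∀ i j : ℕ, 1 ≤ i → i ≤ n → 1 ≤ j → j ≤ n →
      ¬(j = 1 ∧ i ≤ n - 1 ∧ i ≠ n - 3) →
      ¬(j = n - 2 ∧ (i = 1 ∨ i = 2)) →
      br (e i) (e j) = 0) :
    ∀ x y z : L, br x (br y z) = br (br x y) z - br (br x z) y := by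
  have hL34 : L34.IsL34 n lam e br := ⟨hchain, h1, h2, hzero⟩
  refine LinearMap.leibniz_of_span_eq_top hspan br ?_
  rintro _ ⟨i, hi, rfl⟩ _ ⟨j, hj, rfl⟩ _ ⟨k, hk, rfl⟩
  exact hL34.leibniz_basis (by omega) hi hj hk

/-- The `n`-dimensional algebra (`n ≥ 9`) over `ℂ` with basis `e₁,…,eₙ` and
nonzero products `[eᵢ,e₁] = e_{i+1}` (`1 ≤ i ≤ n-1`, `i ≠ n-3`),
`[e₁,e_{n-2}] = λ e_{n-1}`, `[e₂,e_{n-2}] = λ eₙ` is a (right) Leibniz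
algebra (the algebra `L³⁴_{(0,λ,0)}`). -/
theorem L34_is_leibniz
    {L : Type*} [AddCommGroup L] [Module ℂ L]
    (n : ℕ) (hn : 9 ≤ n) (e : ℕ → L) (lam : ℂ)
    (hli : LinearIndependent ℂ (fun i : Fin n => e ((i : ℕ) + 1)))
    (hspan : Submodule.span ℂ (e '' Set.Icc 1 n) = ⊤)
    (br : L →ₗ[ℂ] L →ₗ[ℂ] L)
    (hchain : ∀ i : ℕ, 1 ≤ i → i ≤ n - 1 → i ≠ n - 3 →
      br (e i) (e 1) = e (i + 1))
    (h1 : br (e 1) (e (n - 2)) = lam • e (n - 1))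
    (h2 : br (e 2) (e (n - 2)) = lam • e n)
    (hzero : ∀ i j : ℕ, 1 ≤ i → i ≤ n → 1 ≤ j → j ≤ n →
      ¬(j = 1 ∧ i ≤ n - 1 ∧ i ≠ n - 3) →
      ¬(j = n - 2 ∧ (i = 1 ∨ i = 2)) →
      br (e i) (e j) = 0) :
    ∀ x y z : L, br x (br y z) = br (br x y) z - br (br x z) y :=
  L34_is_leibniz_general n hn e lam hspan br hchain h1 h2 hzero
end

section
/- Let L be a (right) Leibniz algebra containing linearly independent elements with [e_i,e_1] = e_{i+1} for 1 ≤ i ≤ n-1, i ≠ n-3, and suppose e_2,…,e_{n-3} ∈ R(L) and e_{n-1} ∈ R(L), with [e_1,e_{n-2}] = α_1 e_2 + α_2 e_{n-1} and [e_{n-2},e_{n-2}] = β_1 e_2 + β_2 e_{n-1}. Then the Leibniz identity forces β_1 = 0 and [e_2,e_{n-2}] = α_1 e_3 + α_2 e_n, [e_i,e_{n-2}] = α_1 e_{i+1} for 3 ≤ i ≤ n-4, and [e_i,e_{n-2}] = β_2 e_{i+1} for i = n-2, n-1. -/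
/-!
Since `[e₁,e_{n-2}] = α₁e₂ + α₂e_{n-1}` lies in `R(L)`, the Leibniz identity shows that right
multiplication by `e_{n-2}` commutes with right multiplication by `e₁`. Walking along the chain
`eᵢ ↦ e_{i+1}` then determines every `[eᵢ,e_{n-2}]` from `[e₁,e_{n-2}]` and `[e_{n-2},e_{n-2}]`.
At the end of the chain `[eₙ,e₁] = 0`, so `0 = [[eₙ,e_{n-2}],e₁] = β₁e₅`, whence `β₁ = 0`.
-/

def rightAnnihilator {K L : Type*} [CommSemiring K] [AddCommMonoid L] [Module K L]
    (br : L →ₗ[K] L →ₗ[K] L) : Submodule K L :=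
  LinearMap.ker br.flip

theorem mem_rightAnnihilator {K L : Type*} [CommSemiring K] [AddCommMonoid L] [Module K L]
    {br : L →ₗ[K] L →ₗ[K] L} {z : L} : z ∈ rightAnnihilator br ↔ ∀ w, br w z = 0 := by
  simp only [rightAnnihilator, LinearMap.mem_ker, LinearMap.ext_iff, LinearMap.flip_apply,
    LinearMap.zero_apply]

theorem bracket_right_comm_of_mem_rightAnnihilator {K L : Type*} [CommSemiring K]
    [AddCommGroup L] [Module K L] {br : L →ₗ[K] L →ₗ[K] L}
    (hLeib : ∀ x y z : L, br x (br y z) = br (br x y) z - br (br x z) y) {a c : L}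
    (hac : br a c ∈ rightAnnihilator br) (x : L) :
    br (br x a) c = br (br x c) a := by
  rw [← sub_eq_zero, ← hLeib, mem_rightAnnihilator.mp hac]

theorem eq_smul_of_map_chain {K L : Type*} [Semiring K] [AddCommMonoid L] [Module K L]
    {D : L →ₗ[K] L} {f g : ℕ → L} {s : K} {a b : ℕ}
    (hg : ∀ i, a ≤ i → i < b → D (g i) = g (i + 1))
    (hf : ∀ i, a ≤ i → i < b → f (i + 1) = D (f i)) (ha : f a = s • g a) :
    ∀ i, a ≤ i → i ≤ b → f i = s • g i := by
  intro i hai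
  induction i, hai using Nat.le_induction with
  | base => exact fun _ => ha
  | succ j haj ih =>
    intro hjb
    rw [hf j haj hjb, ih (by omega), map_smul, hg j haj hjb]

theorem type_one_case_en1_in_R_general
    {K L : Type*} [Field K] [AddCommGroup L] [Module K L]
    (br : L →ₗ[K] L →ₗ[K] L)
    (hLeib : ∀ x y z : L, br x (br y z) = br (br x y) z - br (br x z) y)
    (n : ℕ) (hn : 9 ≤ n) (e : ℕ → L) (α₁ α₂ β₁ β₂ : K)
    (hli : LinearIndependent K (fun i : Fin n => e ((i : ℕ) + 1)))
    (hchain : ∀ i : ℕ, 1 ≤ i → i ≤ n - 1 → i ≠ n - 3 →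
      br (e i) (e 1) = e (i + 1))
    (hne1 : br (e n) (e 1) = 0)
    (hann : ∀ i : ℕ, 2 ≤ i → i ≤ n - 3 → ∀ w : L, br w (e i) = 0)
    (hann1 : ∀ w : L, br w (e (n - 1)) = 0)
    (h1 : br (e 1) (e (n - 2)) = α₁ • e 2 + α₂ • e (n - 1))
    (h2 : br (e (n - 2)) (e (n - 2)) = β₁ • e 2 + β₂ • e (n - 1)) :
    β₁ = 0 ∧
    br (e 2) (e (n - 2)) = α₁ • e 3 + α₂ • e n ∧
    (∀ i : ℕ, 3 ≤ i → i ≤ n - 4 → br (e i) (e (n - 2)) = α₁ • e (i + 1)) ∧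
    br (e (n - 2)) (e (n - 2)) = β₂ • e (n - 1) ∧
    br (e (n - 1)) (e (n - 2)) = β₂ • e n := by
  have hR : br (e 1) (e (n - 2)) ∈ rightAnnihilator br := h1 ▸ add_mem
    (Submodule.smul_mem _ _ (mem_rightAnnihilator.mpr (hann 2 (by omega) (by omega))))
    (Submodule.smul_mem _ _ (mem_rightAnnihilator.mpr hann1))
  have hswap := bracket_right_comm_of_mem_rightAnnihilator hLeib hR
  have hstep : ∀ i, 1 ≤ i → i ≤ n - 1 → i ≠ n - 3 →
      br (e (i + 1)) (e (n - 2)) = br (br (e i) (e (n - 2))) (e 1) := fun i h₁ h₂ h₃ => by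
    rw [← hchain i h₁ h₂ h₃, hswap]
  have hn1 : n - 1 + 1 = n := by omega
  have hE : ∀ a b : K, br (a • e 2 + b • e (n - 1)) (e 1) = a • e 3 + b • e n := fun a b => by
    simp only [map_add, map_smul, LinearMap.add_apply, LinearMap.smul_apply,
      hchain 2 (by omega) (by omega) (by omega), hchain (n - 1) (by omega) le_rfl (by omega), hn1]
  have hF : ∀ a b : K, br (a • e 3 + b • e n) (e 1) = a • e 4 := fun a b => by
    simp only [map_add, map_smul, LinearMap.add_apply, LinearMap.smul_apply,
      hchain 3 (by omega) (by omega) (by omega), hne1, smul_zero, add_zero]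
  have h2n : br (e 2) (e (n - 2)) = α₁ • e 3 + α₂ • e n := by
    rw [hstep 1 le_rfl (by omega) (by omega), h1, hE]
  have hn1n : br (e (n - 1)) (e (n - 2)) = β₁ • e 3 + β₂ • e n := by
    rw [show n - 1 = n - 2 + 1 by omega, hstep (n - 2) (by omega) (by omega) (by omega), h2, hE]
  have hnn : br (e n) (e (n - 2)) = β₁ • e 4 := by
    rw [← hF β₁ β₂, ← hn1n, ← hstep (n - 1) (by omega) le_rfl (by omega), hn1]
  have hβ₁ : β₁ = 0 := by
    have h5 : β₁ • e 5 = 0 := by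
      rw [← hchain 4 (by omega) (by omega) (by omega), ← LinearMap.smul_apply, ← map_smul, ← hnn,
        ← hswap, hne1, map_zero, LinearMap.zero_apply]
    exact (smul_eq_zero.mp h5).resolve_right (by simpa using hli.ne_zero ⟨4, by omega⟩)
  have hmid : ∀ i, 3 ≤ i → i ≤ n - 4 → br (e i) (e (n - 2)) = α₁ • e (i + 1) :=
    eq_smul_of_map_chain (D := br.flip (e 1)) (f := fun i => br (e i) (e (n - 2)))
      (fun i h₁ h₂ => hchain (i + 1) (by omega) (by omega) (by omega))
      (fun i h₁ h₂ => hstep i (by omega) (by omega) (by omega))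
      (by rw [hstep 2 (by omega) (by omega) (by omega), h2n, hF])
  subst hβ₁
  exact ⟨rfl, h2n, hmid, by rw [h2, zero_smul, zero_add], by rw [hn1n, zero_smul, zero_add]⟩

/-- In a (right) Leibniz algebra with linearly independent `e₁,…,eₙ`
(`n ≥ 9`), `[eᵢ,e₁] = e_{i+1}` (`1 ≤ i ≤ n-1`, `i ≠ n-3`),
`e₂,…,e_{n-3} ∈ R(L)`, `e_{n-1} ∈ R(L)`,
`[e₁,e_{n-2}] = α₁e₂ + α₂e_{n-1}` and `[e_{n-2},e_{n-2}] = β₁e₂ + β₂e_{n-1}`,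
the Leibniz identity forces `β₁ = 0`, `[e₂,e_{n-2}] = α₁e₃ + α₂eₙ`,
`[eᵢ,e_{n-2}] = α₁e_{i+1}` for `3 ≤ i ≤ n-4`, and
`[eᵢ,e_{n-2}] = β₂e_{i+1}` for `i = n-2, n-1`. -/
theorem type_one_case_en1_in_R
    {K L : Type*} [Field K] [AddCommGroup L] [Module K L]
    (br : L →ₗ[K] L →ₗ[K] L)
    (hLeib : ∀ x y z : L, br x (br y z) = br (br x y) z - br (br x z) y)
    (n : ℕ) (hn : 9 ≤ n) (e : ℕ → L) (α₁ α₂ β₁ β₂ : K)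
    (hli : LinearIndependent K (fun i : Fin n => e ((i : ℕ) + 1)))
    (hchain : ∀ i : ℕ, 1 ≤ i → i ≤ n - 1 → i ≠ n - 3 →
      br (e i) (e 1) = e (i + 1))
    (hn31 : br (e (n - 3)) (e 1) = 0)
    (hne1 : br (e n) (e 1) = 0)
    (hann : ∀ i : ℕ, 2 ≤ i → i ≤ n - 3 → ∀ w : L, br w (e i) = 0)
    (hann1 : ∀ w : L, br w (e (n - 1)) = 0)
    (h1 : br (e 1) (e (n - 2)) = α₁ • e 2 + α₂ • e (n - 1))
    (h2 : br (e (n - 2)) (e (n - 2)) = β₁ • e 2 + β₂ • e (n - 1)) :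
    β₁ = 0 ∧
    br (e 2) (e (n - 2)) = α₁ • e 3 + α₂ • e n ∧
    (∀ i : ℕ, 3 ≤ i → i ≤ n - 4 → br (e i) (e (n - 2)) = α₁ • e (i + 1)) ∧
    br (e (n - 2)) (e (n - 2)) = β₂ • e (n - 1) ∧
    br (e (n - 1)) (e (n - 2)) = β₂ • e n :=
  type_one_case_en1_in_R_general br hLeib n hn e α₁ α₂ β₁ β₂ hli hchain hne1 hann hann1 h1 h2
end
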